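/- Let k be a commutative unital ring, let m ≥ 1, and let A be a k-algebra such that [x₁,x₂]^m is a polynomial identity of A. If a₁, …, a_t ∈ A are nilpotent elements, then the non-unital k-subalgebra of A generated by a₁, …, a_t is nilpotent: there exists N such that every product of N elements of this subalgebra equals 0. -/

import Mathlib

/-- `p` is a polynomial identity of the `k`-algebra `A`: every `k`-algebra
homomorphism from the free associative algebra on countably many variables to
`A` (equivalently, every substitution of elements of `A` for the variables)
sends `p` to `0`. -/
def IsPolyId (k A : Type*) [CommRing k] [Semiring A] [Algebra k A]
    (p : FreeAlgebra k ℕ) : Prop :=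
  ∀ f : ℕ → A, FreeAlgebra.lift k f p = 0

/-- `[x₁,x₂]^m`, the `m`-th power of the commutator of the first two variables
of the free algebra. -/
noncomputable def commPow (k : Type*) [CommRing k] (m : ℕ) : FreeAlgebra k ℕ :=
  (FreeAlgebra.ι k 0 * FreeAlgebra.ι k 1 - FreeAlgebra.ι k 1 * FreeAlgebra.ι k 0) ^ m

/-- `[x₁,x₂][x₃,x₄]⋯[x₂ₘ₋₁,x₂ₘ]`, the product of `m` commutators in `2m`
distinct variables of the free algebra. -/
noncomputable def commProd (k : Type*) [CommRing k] (m : ℕ) : FreeAlgebra k ℕ :=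
  ((List.range m).map (fun i =>
    FreeAlgebra.ι k (2 * i) * FreeAlgebra.ι k (2 * i + 1)
      - FreeAlgebra.ι k (2 * i + 1) * FreeAlgebra.ι k (2 * i))).prod

/-- The standard polynomial `st_d(x₁,…,x_d) = Σ_{σ ∈ S_d} sgn(σ) x_{σ(1)}⋯x_{σ(d)}`
in the free algebra. -/
noncomputable def stPoly (k : Type*) [CommRing k] (d : ℕ) : FreeAlgebra k ℕ :=
  ∑ σ : Equiv.Perm (Fin d),
    (Equiv.Perm.sign σ : ℤ) •
      ((List.finRange d).map (fun i => FreeAlgebra.ι k ((σ i : Fin d) : ℕ))).prod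

/-- `A` satisfies a proper (monic multilinear) polynomial identity: for some
`n ≥ 1` there are coefficients `c σ ∈ k` for the non-identity permutations `σ`
of `{1,…,n}` such that `x₁⋯x_n + Σ_{σ ≠ id} c_σ x_{σ(1)}⋯x_{σ(n)}` is a
polynomial identity of `A`. -/
def SatisfiesProperId (k A : Type*) [CommRing k] [Semiring A] [Algebra k A] : Prop :=
  ∃ n : ℕ, 1 ≤ n ∧ ∃ c : Equiv.Perm (Fin n) → k,
    IsPolyId k A
      (((List.finRange n).map (fun i => FreeAlgebra.ι k (i : ℕ))).prod
        + ∑ σ ∈ Finset.univ.erase (1 : Equiv.Perm (Fin n)),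
            c σ • ((List.finRange n).map (fun i => FreeAlgebra.ι k ((σ i : Fin n) : ℕ))).prod)

/-- `a` is strongly nilpotent: every sequence `s` with `s 0 = a` and
`s (n+1) ∈ s n • A • s n` is eventually zero. -/
def IsStronglyNilpotent {A : Type*} [Ring A] (a : A) : Prop :=
  ∀ s : ℕ → A, s 0 = a → (∀ n, ∃ x : A, s (n + 1) = s n * x * s n) →
    ∃ N, ∀ n ≥ N, s n = 0

/-!
Two ingredients. Levitzki: if every element `u` of the non-unital subring generated by a finite
set `Z` satisfies `u ^ q = 0`, then long products of elements of `Z` vanish. By induction on `q`: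
`y ^ (q - 1) * r * y ^ (q - 1) = 0`, so modulo the ideal generated by the `(q - 1)`-th powers the
exponent drops, and the finitely many products of a fixed length only involve a finite sum of
square-zero ideals, which is nilpotent.

Under `[x, y] ^ m = 0`: if `b * b = 0` then `(b * x) ^ (m + 1) = 0`, by multiplying the expansion
of `[b, x] ^ m` by `b * x`. Induction on the nilpotency index of `a` (modulo the ideal generated by
`a ^ (n - 1)`, whose elements are nilpotent by Levitzki) shows that every `a * x` is nilpotent,
with an exponent independent of `x`. Adding the generators one at a time, a word is a short word
in the old generators times a product of elements `α * g` with `g` short, and Levitzki applies to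
these finitely many elements of `α * R`.
-/

def ProdsVanish {M : Type*} [MonoidWithZero M] (s : Set M) (n : ℕ) : Prop :=
  ∀ l : List M, (∀ x ∈ l, x ∈ s) → l.length = n → l.prod = 0

namespace ProdsVanish

variable {M : Type*} [MonoidWithZero M] {s t : Set M} {n : ℕ}

theorem mono (h : ProdsVanish s n) {n' : ℕ} (hn : n ≤ n') : ProdsVanish s n' := by
  intro l hl hlen
  rw [← List.take_append_drop n l, List.prod_append,
    h _ (fun x hx => hl x (List.mem_of_mem_take hx)) (by simp [hlen, hn]), zero_mul]

theorem of_chunks {k : ℕ} (ht : ProdsVanish t n)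
    (hs : ∀ l : List M, (∀ x ∈ l, x ∈ s) → l.length = k → l.prod ∈ t) :
    ProdsVanish s (k * n) := by
  suffices ∀ (j : ℕ) (l : List M), (∀ x ∈ l, x ∈ s) → l.length = k * j →
      ∃ c : List M, (∀ x ∈ c, x ∈ t) ∧ c.length = j ∧ c.prod = l.prod by
    intro l hl hlen
    obtain ⟨c, hc, hclen, hcl⟩ := this n l hl hlen
    rw [← hcl, ht c hc hclen]
  intro j
  induction j with
  | zero => intro l _ hlen; exact ⟨[], by simp, rfl, by simp_all⟩
  | succ j ih =>
    intro l hl hlen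
    obtain ⟨c, hc, hclen, hcl⟩ := ih (l.drop k) (fun x hx => hl x (List.mem_of_mem_drop hx))
      (by rw [List.length_drop, hlen, Nat.mul_succ, Nat.add_sub_cancel])
    refine ⟨(l.take k).prod :: c, ?_, by simp [hclen], ?_⟩
    · simp only [List.mem_cons, forall_eq_or_imp]
      refine ⟨hs _ (fun x hx => hl x (List.mem_of_mem_take hx)) ?_, hc⟩
      simp [hlen, Nat.mul_succ]
    · rw [List.prod_cons, hcl, ← List.prod_append, List.take_append_drop]

theorem subsemigroupClosure (h : ProdsVanish s n) :
    ProdsVanish (Subsemigroup.closure s : Set M) n := by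
  have hword : ∀ x ∈ Subsemigroup.closure s,
      ∃ w : List M, (∀ y ∈ w, y ∈ s) ∧ 1 ≤ w.length ∧ w.prod = x := by
    intro x hx
    induction hx using Subsemigroup.closure_induction with
    | mem x hx => exact ⟨[x], by simpa using hx, by simp, by simp⟩
    | mul x y _ _ hx hy =>
      obtain ⟨w₁, hw₁, hlen₁, rfl⟩ := hx
      obtain ⟨w₂, hw₂, -, rfl⟩ := hy
      exact ⟨w₁ ++ w₂, by simpa using fun z hz => hz.elim (hw₁ z) (hw₂ z), by simp; omega,
        List.prod_append⟩
  have hlist : ∀ l : List M, (∀ x ∈ l, x ∈ Subsemigroup.closure s) →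
      ∃ w : List M, (∀ y ∈ w, y ∈ s) ∧ l.length ≤ w.length ∧ w.prod = l.prod := by
    intro l hl
    induction l with
    | nil => exact ⟨[], by simp, le_rfl, rfl⟩
    | cons x l ih =>
      obtain ⟨w₁, hw₁, hlen₁, hx⟩ := hword x (hl x (by simp))
      obtain ⟨w₂, hw₂, hlen₂, hl'⟩ := ih fun y hy => hl y (by simp [hy])
      exact ⟨w₁ ++ w₂, by simpa using fun z hz => hz.elim (hw₁ z) (hw₂ z), by simp; omega,
        by rw [List.prod_append, hx, hl', List.prod_cons]⟩
  intro l hl hlen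
  obtain ⟨w, hw, hlw, hwl⟩ := hlist l hl
  rw [← hwl, (h.mono (hlen ▸ hlw)) w hw rfl]

theorem span {k A : Type*} [CommSemiring k] [Semiring A] [Algebra k A] {s : Set A}
    (h : ProdsVanish s n) : ProdsVanish (Submodule.span k s : Set A) n := by
  have hpow : ∀ l : List A, (∀ x ∈ l, x ∈ Submodule.span k s) →
      l.prod ∈ Submodule.span k s ^ l.length := by
    intro l hl
    induction l with
    | nil => exact Submodule.one_le.1 le_rfl
    | cons x l ih =>
      rw [List.prod_cons, List.length_cons, pow_succ']
      exact Submodule.mul_mem_mul (hl x (by simp)) (ih fun y hy => hl y (by simp [hy]))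
  have hbot : Submodule.span k s ^ n = ⊥ := by
    rw [Submodule.span_pow, Submodule.span_eq_bot]
    intro x hx
    obtain ⟨f, rfl⟩ := Set.mem_pow.1 hx
    exact h _ (by simp [List.mem_ofFn]) (by simp)
  intro l hl hlen
  have := hpow l hl
  rwa [hlen, hbot, Submodule.mem_bot] at this

end ProdsVanish

theorem Set.Finite.setOf_forall_mem_length_lt {α : Type*} {s : Set α} (hs : s.Finite) (n : ℕ) :
    {l : List α | (∀ x ∈ l, x ∈ s) ∧ l.length < n}.Finite := by
  have := hs.to_subtype
  refine ((List.finite_length_lt s n).image (List.map (↑))).subset ?_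
  rintro l ⟨hl, hlen⟩
  lift l to List s using hl
  exact ⟨l, by simpa using hlen, rfl⟩

section RingIdentities

variable {R : Type*} [Ring R]

theorem add_pow_mul_of_mul_eq_zero {y w : R} (h : w * y = 0) (k : ℕ) :
    (y + w) ^ k * y = y ^ (k + 1) := by
  induction k with
  | zero => simp
  | succ k ih =>
    rw [pow_succ', mul_assoc, ih, add_mul, ← pow_succ', pow_succ' y k, ← mul_assoc, h, zero_mul,
      add_zero]

theorem add_pow_succ_of_mul_eq_zero {y w : R} (h : w * y = 0) (k : ℕ) :
    (y + w) ^ (k + 1) = y ^ (k + 1) + (y + w) ^ k * w := by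
  rw [pow_succ, mul_add, add_pow_mul_of_mul_eq_zero h]

theorem mul_pow_succ_eq_zero_of_mul_self_eq_zero {m : ℕ} {b x : R} (hb : b * b = 0)
    (hbx : (b * x - x * b) ^ m = 0) : (b * x) ^ (m + 1) = 0 := by
  have h : -(x * b) * (b * x) = 0 := by
    rw [neg_mul, mul_assoc, ← mul_assoc b, hb, zero_mul, mul_zero, neg_zero]
  rw [← add_pow_mul_of_mul_eq_zero h, ← sub_eq_add_neg, hbx, zero_mul]

end RingIdentities

namespace NonUnitalSubring

variable {R : Type*} [Ring R] (B : NonUnitalSubring R)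

theorem pow_succ_mem {y : R} (hy : y ∈ B) (k : ℕ) : y ^ (k + 1) ∈ B := by
  induction k with
  | zero => simpa using hy
  | succ k ih => rw [pow_succ]; exact B.mul_mem ih hy

theorem pow_mul_mem {x y : R} (hx : x ∈ B) (hy : y ∈ B) (k : ℕ) : y ^ k * x ∈ B := by
  cases k with
  | zero => simpa using hx
  | succ k => exact B.mul_mem (B.pow_succ_mem hy k) hx

variable {B} {q : ℕ}

theorem pow_mul_pow_eq_zero (hB : ∀ u ∈ B, u ^ (q + 2) = 0) {x y : R} (hx : x ∈ B)
    (hy : y ∈ B) : y ^ (q + 1) * x * y ^ (q + 1) = 0 := by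
  have hwy : x * y ^ (q + 1) * y = 0 := by rw [mul_assoc, ← pow_succ, hB y hy, mul_zero]
  have hw : x * y ^ (q + 1) ∈ B := B.mul_mem hx (B.pow_succ_mem hy q)
  set T := y ^ (q + 1) * x * y ^ (q + 1) with hT
  set P := (y + x * y ^ (q + 1)) ^ q * x with hP
  -- expanding `(y + x y ^ (q + 1)) ^ (q + 2) = 0` twice gives `T + P T = 0`
  have hTP : T + P * T = 0 := by
    have h := add_pow_succ_of_mul_eq_zero hwy (q + 1)
    rw [hB _ (B.add_mem hy hw), hB y hy, zero_add, add_pow_succ_of_mul_eq_zero hwy q] at h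
    rw [h, hT, hP]
    noncomm_ring
  have hPT : -P * T = T := by
    rw [neg_mul, eq_neg_of_add_eq_zero_right hTP, neg_neg]
  have hiter : ∀ k : ℕ, (-P) ^ k * T = T := by
    intro k
    induction k with
    | zero => simp
    | succ k ih => rw [pow_succ, mul_assoc, hPT, ih]
  rw [← hiter (q + 2), hB _ (B.neg_mem (B.pow_mul_mem hx (B.add_mem hy hw) q)), zero_mul]

theorem pow_mul_pow_eq_zero_of_closure_eq_top {Z : Set R} (hgen : Subring.closure Z = ⊤)
    (hZ : ∀ u ∈ closure Z, u ^ (q + 2) = 0) {y : R} (hy : y ∈ closure Z) (r : R) :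
    y ^ (q + 1) * r * y ^ (q + 1) = 0 := by
  have hr : r ∈ (unitization (closure Z)).range := by
    have htop : Subring.closure (closure Z : Set R) = ⊤ :=
      top_unique (hgen ▸ Subring.closure_mono subset_closure)
    rw [unitization_range, mem_subalgebraOfSubring, htop]
    trivial
  obtain ⟨u, rfl⟩ := (AlgHom.mem_range _).1 hr
  have hyy : y ^ (q + 1) * y ^ (q + 1) = 0 := by
    rw [← pow_add, show q + 1 + (q + 1) = q + 2 + q by ring, pow_add, hZ y hy, zero_mul]
  rw [unitization_apply, mul_add, add_mul, ← Int.cast_comm, mul_assoc, hyy, mul_zero, zero_add]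
  exact pow_mul_pow_eq_zero hZ u.snd.2 hy

end NonUnitalSubring

theorem Subring.closure_closure_coe_preimage {R : Type*} [Ring R] {s : Set R} :
    Subring.closure (((↑) : Subring.closure s → R) ⁻¹' s) = ⊤ :=
  eq_top_iff.2 <| by
    rintro ⟨x, hx⟩ -
    induction hx using Subring.closure_induction with
    | mem x hx => exact Subring.subset_closure hx
    | zero => exact zero_mem _
    | one => exact one_mem _
    | add x y _ _ hx hy => exact add_mem hx hy
    | neg x _ hx => exact neg_mem hx
    | mul x y _ _ hx hy => exact mul_mem hx hy

namespace TwoSidedIdeal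

variable {R : Type*} [Ring R]

theorem mk'_eq_zero_iff (I : TwoSidedIdeal R) {x : R} : I.ringCon.mk' x = 0 ↔ x ∈ I := by
  rw [← mem_ker, ker_ringCon_mk']

theorem exists_list_of_mem_span {T : Set R} {x : R} (hx : x ∈ span T) :
    ∃ L : List (R × R × R), (∀ p ∈ L, p.2.1 ∈ T) ∧
      x = (L.map fun p => p.1 * p.2.1 * p.2.2).sum := by
  induction hx using span_induction with
  | mem t ht => exact ⟨[(1, t, 1)], by simpa using ht, by simp⟩
  | zero => exact ⟨[], by simp, by simp⟩
  | add x y _ _ hx hy =>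
    obtain ⟨L₁, hL₁, rfl⟩ := hx
    obtain ⟨L₂, hL₂, rfl⟩ := hy
    exact ⟨L₁ ++ L₂, fun p hp => (List.mem_append.1 hp).elim (hL₁ p) (hL₂ p), by simp⟩
  | neg x _ hx =>
    obtain ⟨L, hL, rfl⟩ := hx
    refine ⟨L.map fun p => (-1 * p.1, p.2), List.forall_mem_map.2 hL, ?_⟩
    rw [neg_eq_neg_one_mul, ← List.sum_map_mul_left]
    simp [mul_assoc, Function.comp_def]
  | left_absorb a x _ hx =>
    obtain ⟨L, hL, rfl⟩ := hx
    exact ⟨L.map fun p => (a * p.1, p.2), List.forall_mem_map.2 hL,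
      by simp [← List.sum_map_mul_left, mul_assoc, Function.comp_def]⟩
  | right_absorb b x _ hx =>
    obtain ⟨L, hL, rfl⟩ := hx
    exact ⟨L.map fun p => (p.1, p.2.1, p.2.2 * b), List.forall_mem_map.2 hL,
      by simp [← List.sum_map_mul_right, mul_assoc, Function.comp_def]⟩

theorem exists_finite_subset_of_subset_span {T W : Set R} (hW : W.Finite)
    (hWT : W ⊆ span T) : ∃ T₀ ⊆ T, T₀.Finite ∧ W ⊆ span T₀ := by
  have key : ∀ x ∈ W, ∃ T₀ ⊆ T, T₀.Finite ∧ x ∈ span T₀ := by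
    intro x hx
    obtain ⟨L, hL, rfl⟩ := exists_list_of_mem_span (hWT hx)
    refine ⟨{t | t ∈ L.map fun p => p.2.1}, ?_, List.finite_toSet _, ?_⟩
    · exact List.forall_mem_map.2 hL
    · refine listSum_mem _ _ _ fun p hp => mul_mem_right _ _ _ (mul_mem_left _ _ _ ?_)
      exact subset_span (List.mem_map_of_mem (f := fun p => p.2.1) hp)
  choose! T₀ hT₀T hT₀fin hxT₀ using key
  exact ⟨⋃ x ∈ W, T₀ x, Set.iUnion₂_subset hT₀T, hW.biUnion hT₀fin,
    fun x hx => span_mono (Set.subset_biUnion_of_mem hx) (hxT₀ x hx)⟩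

theorem mul_eq_zero_of_mem_span_singleton {t : R} (ht : ∀ r, t * r * t = 0) {x y : R}
    (hx : x ∈ span {t}) (hy : y ∈ span {t}) : x * y = 0 := by
  have hty : ∀ y ∈ span {t}, ∀ r, t * r * y = 0 := by
    intro y hy
    induction hy using span_induction with
    | mem y hy => rw [Set.mem_singleton_iff.1 hy]; exact ht
    | zero => simp
    | add y z _ _ hy hz => intro r; rw [mul_add, hy, hz, add_zero]
    | neg y _ hy => intro r; rw [mul_neg, hy, neg_zero]
    | left_absorb a y _ hy => intro r; rw [← mul_assoc, mul_assoc t, hy]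
    | right_absorb b y _ hy => intro r; rw [← mul_assoc, hy, zero_mul]
  induction hx using span_induction generalizing y with
  | mem x hx => rw [Set.mem_singleton_iff.1 hx, ← mul_one t]; exact hty y hy 1
  | zero => simp
  | add x z _ _ hx hz => rw [add_mul, hx hy, hz hy, add_zero]
  | neg x _ hx => rw [neg_mul, hx hy, neg_zero]
  | left_absorb a x _ hx => rw [mul_assoc, hx hy, mul_zero]
  | right_absorb b x _ hx => rw [mul_assoc, hx (mul_mem_left _ _ _ hy)]

theorem exists_list_prod_sub_mem_of_mem_sup {I K : TwoSidedIdeal R} (l : List R)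
    (hl : ∀ x ∈ l, x ∈ I ⊔ K) :
    ∃ l' : List R, (∀ x ∈ l', x ∈ I) ∧ l'.length = l.length ∧
      l.prod - l'.prod ∈ K := by
  induction l with
  | nil => exact ⟨[], by simp, rfl, by simp⟩
  | cons x l ih =>
    obtain ⟨l', hl', hlen, hK⟩ := ih fun y hy => hl y (by simp [hy])
    obtain ⟨a, ha, c, hc, rfl⟩ := mem_sup.1 (hl x (by simp))
    refine ⟨a :: l', by simpa using ⟨ha, hl'⟩, by simp [hlen], ?_⟩
    have : (a + c) * l.prod - a * l'.prod = c * l.prod + a * (l.prod - l'.prod) := by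
      noncomm_ring
    rw [List.prod_cons, List.prod_cons, this]
    exact add_mem _ (mul_mem_right _ _ _ hc) (mul_mem_left _ _ _ hK)

theorem exists_prodsVanish_span {T : Set R} (hT : T.Finite)
    (hsq : ∀ t ∈ T, ∀ r, t * r * t = 0) :
    ∃ n, ProdsVanish (span T : Set R) n := by
  induction T, hT using Set.Finite.induction_on with
  | empty =>
    refine ⟨1, fun l hl hlen => ?_⟩
    obtain ⟨x, rfl⟩ := List.length_eq_one_iff.1 hlen
    have : span (∅ : Set R) ≤ ⊥ := span_le.2 (Set.empty_subset _)
    simpa using (mem_bot R).1 (this (hl x (by simp)))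
  | @insert t T _ _ ih =>
    obtain ⟨n, hn⟩ := ih fun s hs => hsq s (Set.mem_insert_of_mem t hs)
    have hle : span (insert t T) ≤ span T ⊔ span {t} :=
      span_le.2 (Set.insert_subset (mem_sup_right (subset_span rfl))
        fun s hs => mem_sup_left (subset_span hs))
    -- modulo `span {t}`, such a product is a product of `n` elements of `span T`
    have hhalf : ∀ l : List R, (∀ x ∈ l, x ∈ span (insert t T)) → l.length = n →
        l.prod ∈ span {t} := by
      intro l hl hlen
      obtain ⟨l', hl', hlen', hK⟩ :=
        exists_list_prod_sub_mem_of_mem_sup l fun x hx => hle (hl x hx)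
      rwa [hn l' hl' (hlen'.trans hlen), sub_zero] at hK
    refine ⟨n + n, fun l hl hlen => ?_⟩
    rw [← List.take_append_drop n l, List.prod_append]
    exact mul_eq_zero_of_mem_span_singleton (hsq t (Set.mem_insert t T))
      (hhalf _ (fun x hx => hl x (List.mem_of_mem_take hx)) (by simp [hlen]))
      (hhalf _ (fun x hx => hl x (List.mem_of_mem_drop hx)) (by simp [hlen]))

end TwoSidedIdeal

open NonUnitalSubring in
theorem levitzki_of_closure_eq_top (q : ℕ) {R : Type*} [Ring R] {Z : Set R} (hZ : Z.Finite)
    (hgen : Subring.closure Z = ⊤) (hq : ∀ u ∈ closure Z, u ^ (q + 1) = 0) :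
    ∃ K, ProdsVanish Z K := by
  induction q generalizing R with
  | zero =>
    refine ⟨1, fun l hl hlen => ?_⟩
    obtain ⟨x, rfl⟩ := List.length_eq_one_iff.1 hlen
    simpa using hq x (subset_closure (hl x (by simp)))
  | succ q ih =>
    set J := TwoSidedIdeal.span ((· ^ (q + 1)) '' (closure Z : Set R))
    set π := J.ringCon.mk'
    have hπ : Function.Surjective π := RingCon.mk'_surjective _
    obtain ⟨K, hK⟩ : ∃ K, ProdsVanish (π '' Z) K := by
      refine ih (hZ.image π) ?_ ?_
      · rw [← RingHom.map_closure, hgen, ← RingHom.range_eq_map, RingHom.range_eq_top.2 hπ]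
      · rintro _ hu'
        obtain ⟨u, hu, rfl⟩ : _ ∈ (closure Z).map π.toNonUnitalRingHom := by
          rwa [NonUnitalRingHom.map_closure]
        change π u ^ (q + 1) = 0
        rw [← map_pow]
        exact J.mk'_eq_zero_iff.2 (TwoSidedIdeal.subset_span ⟨u, hu, rfl⟩)
    have hchunk : ∀ l : List R, (∀ x ∈ l, x ∈ Z) → l.length = K → l.prod ∈ J := by
      intro l hl hlen
      rw [← J.mk'_eq_zero_iff, map_list_prod]
      exact hK _ (List.forall_mem_map.2 fun x hx => Set.mem_image_of_mem π (hl x hx))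
        (by simp [hlen])
    have hWfin : {l : List R | (∀ x ∈ l, x ∈ Z) ∧ l.length = K}.Finite :=
      (hZ.setOf_forall_mem_length_lt (K + 1)).subset fun l hl => ⟨hl.1, by simp [hl.2]⟩
    obtain ⟨T, hTJ, hTfin, hchunkT⟩ :=
      TwoSidedIdeal.exists_finite_subset_of_subset_span (hWfin.image List.prod)
        (by rintro _ ⟨l, ⟨hl, hlen⟩, rfl⟩; exact hchunk l hl hlen)
    obtain ⟨n, hn⟩ := TwoSidedIdeal.exists_prodsVanish_span hTfin fun t ht r => by
      obtain ⟨y, hy, rfl⟩ := hTJ ht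
      exact pow_mul_pow_eq_zero_of_closure_eq_top hgen hq hy r
    exact ⟨K * n, hn.of_chunks fun l hl hlen => hchunkT ⟨l, ⟨hl, hlen⟩, rfl⟩⟩

theorem levitzki {R : Type*} [Ring R] {Z : Set R} (hZ : Z.Finite) {q : ℕ}
    (hq : ∀ u ∈ NonUnitalSubring.closure Z, u ^ q = 0) : ∃ K, ProdsVanish Z K := by
  let S := Subring.closure Z
  have hZ' : ((Subtype.val : S → R) ⁻¹' Z).Finite := hZ.preimage Subtype.val_injective.injOn
  obtain ⟨K, hK⟩ := levitzki_of_closure_eq_top q hZ' Subring.closure_closure_coe_preimage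
    fun u hu => by
      have hu' : (u : R) ∈ NonUnitalSubring.closure Z :=
        NonUnitalSubring.closure_preimage_le (S.subtype : S →ₙ+* R) Z hu
      apply Subtype.val_injective
      simp [pow_succ, hq _ hu']
  refine ⟨K, fun l hl hlen => ?_⟩
  lift l to List S using fun x hx => Subring.subset_closure (hl x hx)
  rw [← SubmonoidClass.coe_list_prod, hK l (by simpa using hl) (by simpa using hlen),
    ZeroMemClass.coe_zero]

section RightIdeal

variable {R : Type*} [Ring R] {a : R} {p : ℕ}

theorem exists_prodsVanish_of_forall_pow_mul_eq_zero (ha : ∀ w, (a * w) ^ p = 0) {Z : Set R}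
    (hZ : Z.Finite) (hZa : ∀ z ∈ Z, ∃ w, z = a * w) : ∃ K, ProdsVanish Z K := by
  refine levitzki (q := p) hZ fun u hu => ?_
  obtain ⟨w, rfl⟩ : ∃ w, u = a * w := by
    induction hu using NonUnitalSubring.closure_induction with
    | mem z hz => exact hZa z hz
    | zero => exact ⟨0, (mul_zero a).symm⟩
    | add _ _ _ _ h₁ h₂ =>
      obtain ⟨w₁, rfl⟩ := h₁
      obtain ⟨w₂, rfl⟩ := h₂
      exact ⟨w₁ + w₂, (mul_add ..).symm⟩
    | neg _ _ h =>
      obtain ⟨w, rfl⟩ := h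
      exact ⟨-w, (mul_neg ..).symm⟩
    | mul _ y _ _ h _ =>
      obtain ⟨w, rfl⟩ := h
      exact ⟨w * y, mul_assoc ..⟩
  exact ha w

theorem isNilpotent_of_mem_span_singleton (ha : ∀ w, (a * w) ^ p = 0) {σ : R}
    (hσ : σ ∈ TwoSidedIdeal.span {a}) : IsNilpotent σ := by
  obtain ⟨L, hL, hσL⟩ := TwoSidedIdeal.exists_list_of_mem_span hσ
  replace hσL : σ = (L.map fun p => p.1 * a * p.2.2).sum := by
    rw [hσL]
    exact congrArg _ (List.map_congr_left fun p hp => by rw [hL p hp])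
  set Z := Set.image2 (fun p p' : R × R × R => a * (p.2.2 * p'.1)) {p | p ∈ L} {p | p ∈ L}
  obtain ⟨K, hK⟩ := exists_prodsVanish_of_forall_pow_mul_eq_zero ha (Z := Z)
    ((List.finite_toSet L).image2 _ (List.finite_toSet L))
    (by rintro _ ⟨p, -, p', -, rfl⟩; exact ⟨p.2.2 * p'.1, rfl⟩)
  -- `σ ^ (k + 1)` is a sum of products `r (a s r') ⋯ (a s⁽ᵏ⁾)` with `k` middle factors in `Z`
  have hgroup : ∀ k (zs : List R), (∀ z ∈ zs, z ∈ Z) → zs.length + k = K →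
      ∀ p ∈ L, zs.prod * (a * p.2.2) * σ ^ k = 0 := by
    intro k
    induction k with
    | zero => intro zs hzs hlen p _; rw [hK zs hzs hlen, zero_mul, zero_mul]
    | succ k ih =>
      intro zs hzs hlen p hp
      rw [pow_succ', ← mul_assoc]
      set s := σ ^ k
      rw [hσL, ← List.sum_map_mul_left, ← List.sum_map_mul_right]
      refine List.sum_eq_zero fun x hx => ?_
      obtain ⟨p', hp', rfl⟩ := List.mem_map.1 hx
      have hzs' : ∀ z ∈ zs ++ [a * (p.2.2 * p'.1)], z ∈ Z := fun z hz =>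
        (List.mem_append.1 hz).elim (hzs z) fun h => by
          rw [List.mem_singleton.1 h]; exact ⟨p, hp, p', hp', rfl⟩
      rw [← ih _ hzs' (by simp; omega) p' hp', List.prod_append]
      simp [mul_assoc]
  refine ⟨K + 1, ?_⟩
  rw [pow_succ']
  set s := σ ^ K
  rw [hσL, ← List.sum_map_mul_right]
  exact List.sum_eq_zero fun x hx => by
    obtain ⟨p, hp, rfl⟩ := List.mem_map.1 hx
    simpa [mul_assoc] using congrArg (p.1 * ·) (hgroup K [] (by simp) (by simp) p hp)

end RightIdeal

section CommutatorPowerIdentity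

variable {m : ℕ}

theorem isNilpotent_mul_of_pow_eq_zero (n : ℕ) {R : Type*} [Ring R]
    (hcomm : ∀ x y : R, (x * y - y * x) ^ m = 0) {a : R} (ha : a ^ n = 0) (x : R) :
    IsNilpotent (a * x) := by
  induction n generalizing R with
  | zero => exact ⟨1, by rw [pow_one, ← one_mul (a * x), ← pow_zero a, ha, zero_mul]⟩
  | succ n ih =>
    rcases n with _ | n
    · rw [zero_add, pow_one] at ha
      rw [ha, zero_mul]
      exact IsNilpotent.zero
    -- quotient by the ideal generated by `a ^ (n + 1)`, whose generator squares to zero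
    set J := TwoSidedIdeal.span {a ^ (n + 1)}
    set π := J.ringCon.mk'
    have hπ : Function.Surjective π := RingCon.mk'_surjective _
    have hcomm' : ∀ x y : J.ringCon.Quotient, (x * y - y * x) ^ m = 0 := by
      intro x y
      obtain ⟨x, rfl⟩ := hπ x
      obtain ⟨y, rfl⟩ := hπ y
      rw [← map_mul, ← map_mul, ← map_sub, ← map_pow, hcomm, map_zero]
    obtain ⟨Q, hQ⟩ := ih hcomm' (a := π a)
      (by rw [← map_pow, J.mk'_eq_zero_iff]; exact TwoSidedIdeal.subset_span rfl) (π x)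
    rw [← map_mul, ← map_pow, J.mk'_eq_zero_iff] at hQ
    have hbb : a ^ (n + 1) * a ^ (n + 1) = 0 := by
      rw [← pow_add, show n + 1 + (n + 1) = n + 2 + n by ring, pow_add, ha, zero_mul]
    exact (isNilpotent_of_mem_span_singleton
      (fun w => mul_pow_succ_eq_zero_of_mul_self_eq_zero hbb (hcomm _ w)) hQ).of_pow

theorem exists_forall_pow_mul_eq_zero {R : Type*} [Ring R]
    (hcomm : ∀ x y : R, (x * y - y * x) ^ m = 0) {a : R} (ha : IsNilpotent a) :
    ∃ Q, ∀ x, (a * x) ^ Q = 0 := by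
  obtain ⟨n, hn⟩ := ha
  -- in the ring `R → R`, nilpotency of `a * id` bounds the exponent uniformly in `x`
  obtain ⟨Q, hQ⟩ := isNilpotent_mul_of_pow_eq_zero n (R := R → R) (a := fun _ => a)
    (fun f g => funext fun t => by simpa using hcomm (f t) (g t))
    (funext fun _ => by simpa using hn) id
  exact ⟨Q, fun x => by simpa using congrFun hQ x⟩

end CommutatorPowerIdentity

section Words

variable {R : Type*} [Ring R] {G : Set R} {N : ℕ}

theorem prod_eq_zero_or_exists_eq_mul_prod (hG : ProdsVanish G N) (α : R) (w : List R)
    (hw : ∀ x ∈ w, x ∈ insert α G) :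
    w.prod = 0 ∨ ∃ g zs : List R, (∀ x ∈ g, x ∈ G) ∧ g.length < N ∧
      (∀ z ∈ zs, z ∈ (α * List.prod ·) '' {g | (∀ x ∈ g, x ∈ G) ∧ g.length < N}) ∧
      w.prod = g.prod * zs.prod ∧ w.length ≤ g.length + N * zs.length := by
  induction w with
  | nil =>
    rcases Nat.eq_zero_or_pos N with rfl | hN
    · exact Or.inl (hG [] (by simp) rfl)
    · exact Or.inr ⟨[], [], by simp, hN, by simp, by simp, by simp⟩
  | cons x w ih =>
    rcases ih fun y hy => hw y (by simp [hy]) with hw0 | ⟨g, zs, hg, hglen, hzs, hprod, hlen⟩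
    · exact Or.inl (by rw [List.prod_cons, hw0, mul_zero])
    rcases hw x (by simp) with rfl | hx
    · refine Or.inr ⟨[], (x * g.prod) :: zs, by simp, by simp; omega, ?_, ?_, ?_⟩
      · simpa using ⟨⟨g, ⟨hg, hglen⟩, rfl⟩, hzs⟩
      · rw [List.prod_cons, hprod, List.prod_nil, one_mul, List.prod_cons, mul_assoc]
      · simp only [List.length_cons, List.length_nil, mul_add]
        omega
    rcases Nat.lt_or_ge (g.length + 1) N with hlt | hge
    · refine Or.inr ⟨x :: g, zs, by simpa using ⟨hx, hg⟩, by simpa using hlt, hzs, ?_, ?_⟩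
      · rw [List.prod_cons, hprod, List.prod_cons, mul_assoc]
      · simp only [List.length_cons]
        omega
    · have h0 := hG (x :: g) (by simpa using ⟨hx, hg⟩) (by simp only [List.length_cons]; omega)
      rw [List.prod_cons] at h0
      exact Or.inl (by rw [List.prod_cons, hprod, ← mul_assoc, h0, zero_mul])

theorem ProdsVanish.insert (hG : ProdsVanish G N) (hGfin : G.Finite) {α : R} {Q : ℕ}
    (hα : ∀ x, (α * x) ^ Q = 0) : ∃ N', ProdsVanish (insert α G) N' := by
  obtain ⟨K, hK⟩ := exists_prodsVanish_of_forall_pow_mul_eq_zero hα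
    ((hGfin.setOf_forall_mem_length_lt N).image (α * List.prod ·))
    (by rintro _ ⟨g, -, rfl⟩; exact ⟨g.prod, rfl⟩)
  refine ⟨N * (K + 1), fun w hw hlen => ?_⟩
  rcases prod_eq_zero_or_exists_eq_mul_prod hG α w hw with
    hw0 | ⟨g, zs, -, hglen, hzs, hprod, hwlen⟩
  · exact hw0
  have hK' : K ≤ zs.length := by
    have : N * (K + 1) < N * (zs.length + 1) := by
      rw [hlen, mul_add_one] at hwlen
      rw [mul_add_one, mul_add_one]
      omega
    have := Nat.lt_of_mul_lt_mul_left this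
    omega
  rw [hprod, hK.mono hK' zs hzs rfl, mul_zero]

theorem exists_prodsVanish_of_isNilpotent {m : ℕ} (hcomm : ∀ x y : R, (x * y - y * x) ^ m = 0)
    (hG : G.Finite) (hnil : ∀ g ∈ G, IsNilpotent g) : ∃ N, ProdsVanish G N := by
  induction G, hG using Set.Finite.induction_on with
  | empty => exact ⟨1, fun l hl hlen => by
      obtain ⟨x, rfl⟩ := List.length_eq_one_iff.1 hlen
      simpa using hl x (by simp)⟩
  | @insert α G _ hGfin ih =>
    obtain ⟨N, hN⟩ := ih fun g hg => hnil g (Set.mem_insert_of_mem α hg)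
    obtain ⟨Q, hQ⟩ := exists_forall_pow_mul_eq_zero hcomm (hnil α (Set.mem_insert α G))
    exact hN.insert hGfin hQ

end Words

theorem IsPolyId.commutator_pow_eq_zero {k A : Type*} [CommRing k] [Ring A] [Algebra k A]
    {m : ℕ} (h : IsPolyId k A (commPow k m)) (x y : A) : (x * y - y * x) ^ m = 0 := by
  simpa [commPow] using h fun i => if i = 0 then x else y

theorem subalgebra_of_nilpotents_is_nilpotent_general
    (k A : Type*) [CommRing k] [Ring A] [Algebra k A]
    (m : ℕ) (hid : IsPolyId k A (commPow k m))
    (t : ℕ) (a : Fin t → A) (ha : ∀ i, IsNilpotent (a i)) :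
    ∃ N : ℕ, ∀ l : List A, l.length = N →
      (∀ x ∈ l, x ∈ NonUnitalAlgebra.adjoin k (Set.range a)) → l.prod = 0 := by
  obtain ⟨N, hN⟩ := exists_prodsVanish_of_isNilpotent hid.commutator_pow_eq_zero
    (Set.finite_range a) (Set.forall_mem_range.2 ha)
  refine ⟨N, fun l hlen hl => hN.subsemigroupClosure.span (k := k) l (fun x hx => ?_) hlen⟩
  rw [SetLike.mem_coe, ← NonUnitalAlgebra.adjoin_eq_span]
  exact hl x hx

theorem subalgebra_of_nilpotents_is_nilpotent
    (k A : Type*) [CommRing k] [Ring A] [Algebra k A]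
    (m : ℕ) (hm : 1 ≤ m) (hid : IsPolyId k A (commPow k m))
    (t : ℕ) (a : Fin t → A) (ha : ∀ i, IsNilpotent (a i)) :
    ∃ N : ℕ, ∀ l : List A, l.length = N →
      (∀ x ∈ l, x ∈ NonUnitalAlgebra.adjoin k (Set.range a)) → l.prod = 0 :=
  subalgebra_of_nilpotents_is_nilpotent_general k A m hid t a ha
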